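/- The pushforward under the map x ↦ 1/x of the probability measure on (1/4, ∞) with density √(4x−1)/(2πx²) (the free positive stable law with index 1/2) equals the free Poisson distribution fp(1), i.e., the probability measure on (0,4) with density √((4−x)x)/(2πx). -/

import Mathlib

open MeasureTheory Set

/-- The free positive stable law with index 1/2: the probability measure on `(1/4, ∞)`
with density `√(4x-1)/(2πx²)`. -/
noncomputable def freeStableHalf : Measure ℝ :=
  MeasureTheory.volume.withDensity
    (fun x => ENNReal.ofReal
      ((Set.Ioi (1 / 4 : ℝ)).indicator
        (fun x => Real.sqrt (4 * x - 1) / (2 * Real.pi * x ^ 2)) x))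

/-- The free Poisson distribution `fp(1)`: the probability measure on `(0,4)` with
density `√((4-x)x)/(2πx)`. -/
noncomputable def fpOne : Measure ℝ :=
  MeasureTheory.volume.withDensity
    (fun x => ENNReal.ofReal
      ((Set.Ioo (0 : ℝ) 4).indicator
        (fun x => Real.sqrt ((4 - x) * x) / (2 * Real.pi * x)) x))

/-! Inversion has Jacobian `x⁻²`, so it carries a density `f` to `x⁻² f(x⁻¹)`. For the stable
density this is `√(4/x - 1)/(2π)` on `(0, 4)`, and `√(4/x - 1) = √((4 - x)x)/x` there. -/

theorem Real.map_inv_volume_withDensity (f : ℝ → ENNReal) :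
    (volume.withDensity f).map (·⁻¹) =
      volume.withDensity fun x => ENNReal.ofReal (x ^ 2)⁻¹ * f x⁻¹ := by
  ext s hs
  have hs₀ : MeasurableSet (s ∩ {0}ᶜ) := hs.inter (measurableSet_singleton 0).compl
  have himage : (·⁻¹) ⁻¹' s ∩ {0}ᶜ = (·⁻¹) '' (s ∩ {0}ᶜ) := by
    rw [image_eq_preimage_of_inverse inv_inv inv_inv, preimage_inter]
    simp
  have hderiv : ∀ x ∈ s ∩ {0}ᶜ, HasDerivWithinAt (·⁻¹) (-(x ^ 2)⁻¹) (s ∩ {0}ᶜ) x :=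
    fun x hx => (hasDerivAt_inv hx.2).hasDerivWithinAt
  -- Inversion is not differentiable at the Lebesgue-null point `0`, so we integrate over `{0}ᶜ`.
  rw [Measure.map_apply measurable_inv hs, withDensity_apply _ (measurable_inv hs),
    withDensity_apply _ hs, ← restrict_compl_singleton (μ := volume) 0,
    Measure.restrict_restrict (measurable_inv hs), Measure.restrict_restrict hs, himage,
    lintegral_image_eq_lintegral_abs_deriv_mul hs₀ hderiv inv_injective.injOn]
  simp only [abs_neg, abs_inv, abs_sq]

theorem inv_mem_Ioi_quarter_iff {x : ℝ} : x⁻¹ ∈ Ioi (1 / 4 : ℝ) ↔ x ∈ Ioo 0 4 := by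
  rw [← Set.mem_inv, Set.inv_Ioi₀ (by norm_num)]
  norm_num

theorem sqrt_four_sub_mul_self {x : ℝ} (hx : 0 < x) :
    √((4 - x) * x) = x * √(4 * x⁻¹ - 1) := by
  have h : (4 - x) * x = x ^ 2 * (4 * x⁻¹ - 1) := by field_simp
  rw [h, Real.sqrt_mul (sq_nonneg x), Real.sqrt_sq hx.le]

theorem inv_sq_mul_freeStableHalf_density_inv (x : ℝ) :
    (x ^ 2)⁻¹ * (Ioi (1 / 4 : ℝ)).indicator (fun y => √(4 * y - 1) / (2 * Real.pi * y ^ 2)) x⁻¹ =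
      (Ioo 0 4).indicator (fun y => √((4 - y) * y) / (2 * Real.pi * y)) x := by
  by_cases hx : x ∈ Ioo 0 4
  · rw [indicator_of_mem (inv_mem_Ioi_quarter_iff.2 hx), indicator_of_mem hx,
      sqrt_four_sub_mul_self hx.1]
    have hπ : 0 < Real.pi := Real.pi_pos
    have hx₀ : x ≠ 0 := hx.1.ne'
    field_simp
  · rw [indicator_of_notMem (mt inv_mem_Ioi_quarter_iff.1 hx), indicator_of_notMem hx, mul_zero]

theorem freeStableHalf_inv_eq_fpOne :
    Measure.map (fun x : ℝ => x⁻¹) freeStableHalf = fpOne := by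
  rw [freeStableHalf, Real.map_inv_volume_withDensity, fpOne]
  congr with x
  rw [← ENNReal.ofReal_mul (by positivity), inv_sq_mul_freeStableHalf_density_inv]
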